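/- Let t = diag(a, a⁻¹, b, b⁻¹) be an invertible diagonal 4×4 complex matrix (an element of the maximal torus of Sp(4, ℂ)). Then conjugation Ad(t): X ↦ t·X·t⁻¹ maps the symplectic Lie algebra 𝔰𝔭(4, ℂ) into itself, and the induced linear automorphism of the 6-dimensional quotient vector space 𝔤𝔩(4, ℂ)/𝔰𝔭(4, ℂ) has determinant 1. (This is the paper's claim that the six remaining weight spaces of the restricted torus on 𝔤/𝔥 contribute trivially to the product of weights.) -/

import Mathlib

open Matrix

/-- The standard `4×4` skew form `J₄`. -/
noncomputable def J4 : Matrix (Fin 4) (Fin 4) ℂ :=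
  !![0, 1, 0, 0; -1, 0, 0, 0; 0, 0, 0, 1; 0, 0, -1, 0]

/-- The symplectic Lie algebra `𝔰𝔭(4, ℂ) = {X : X·J₄ + J₄·Xᵀ = 0}` as a subspace
of `𝔤𝔩(4, ℂ)`. -/
noncomputable def sp4 : Submodule ℂ (Matrix (Fin 4) (Fin 4) ℂ) where
  carrier := {X | X * J4 + J4 * Xᵀ = 0}
  zero_mem' := by simp
  add_mem' := by
    intro a b ha hb
    show (a + b) * J4 + J4 * (a + b)ᵀ = 0
    rw [Matrix.transpose_add, add_mul, mul_add]
    calc a * J4 + b * J4 + (J4 * aᵀ + J4 * bᵀ)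
        = (a * J4 + J4 * aᵀ) + (b * J4 + J4 * bᵀ) := by abel
      _ = 0 := by rw [ha, hb, add_zero]
  smul_mem' := by
    intro c a ha
    show (c • a) * J4 + J4 * (c • a)ᵀ = 0
    rw [Matrix.transpose_smul, Matrix.smul_mul, Matrix.mul_smul, ← smul_add, ha, smul_zero]

/-!
The map `X ↦ X J₄ + J₄ Xᵀ` has kernel `𝔰𝔭(4, ℂ)` and skew-symmetric values, so its six entries
above the diagonal identify `𝔤𝔩(4, ℂ) ⧸ 𝔰𝔭(4, ℂ)` with `ℂ⁶`. As `t` is diagonal and symplectic, this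
identification turns `Ad(t)` into `S ↦ t S t`, which scales the `(i, j)` entry by `tᵢ tⱼ`. The
determinant is therefore `∏_{i<j} tᵢ tⱼ = (det t)³ = 1`.
-/

namespace LinearMap

theorem ker_le_comap_ker_of_comp_eq {R M N : Type*} [Semiring R] [AddCommMonoid M] [Module R M]
    [AddCommMonoid N] [Module R N] {ψ : M →ₗ[R] N} {f : M →ₗ[R] M} {g : N →ₗ[R] N}
    (hfg : ψ ∘ₗ f = g ∘ₗ ψ) : ker ψ ≤ (ker ψ).comap f := by
  rw [← ker_comp, hfg]
  exact ker_le_ker_comp ψ g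

variable {R M N : Type*} [CommRing R] [AddCommGroup M] [Module R M] [AddCommGroup N] [Module R N]

theorem det_mapQ_eq_of_comp_eq {ψ : M →ₗ[R] N} (hψ : Function.Surjective ψ) {f : M →ₗ[R] M}
    {g : N →ₗ[R] N} (hfg : ψ ∘ₗ f = g ∘ₗ ψ) {p : Submodule R M} (hp : ker ψ = p)
    (h : p ≤ p.comap f) : LinearMap.det (p.mapQ p f h) = LinearMap.det g := by
  subst hp
  set e := ψ.quotKerEquivOfSurjective hψ
  have hconj :
      (ker ψ).mapQ (ker ψ) f h = (e.symm : N →ₗ[R] _) ∘ₗ g ∘ₗ (e.symm.symm : _ →ₗ[R] N) := by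
    ext x
    simp only [e, comp_apply, LinearEquiv.symm_symm, LinearEquiv.coe_coe, LinearEquiv.eq_symm_apply,
      Submodule.mkQ_apply, Submodule.mapQ_apply, quotKerEquivOfSurjective_apply_mk]
    exact LinearMap.congr_fun hfg x
  rw [hconj, det_conj]

end LinearMap

namespace Matrix

theorem eq_zero_of_transpose_eq_neg {n α : Type*} [LinearOrder n] [AddGroup α] [IsAddTorsionFree α]
    {S : Matrix n n α} (hS : Sᵀ = -S) (h : ∀ i j, i < j → S i j = 0) : S = 0 := by
  have hS' : ∀ i j, S j i = -S i j := fun i j => congr_fun (congr_fun hS i) j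
  ext i j
  rcases lt_trichotomy i j with hij | rfl | hij
  · exact h i j hij
  · exact self_eq_neg.mp (hS' i i)
  · rw [zero_apply, hS', h j i hij, neg_zero]

variable {n R : Type*} [Fintype n] [DecidableEq n] [CommRing R]

def symplecticDefect (J : Matrix n n R) : Matrix n n R →ₗ[R] Matrix n n R :=
  LinearMap.mulRight R J + LinearMap.mulLeft R J ∘ₗ (transposeLinearEquiv n n R R).toLinearMap

@[simp]
theorem symplecticDefect_apply (J X : Matrix n n R) : symplecticDefect J X = X * J + J * Xᵀ :=
  rfl

variable {J : Matrix n n R}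

theorem transpose_symplecticDefect (hJ : Jᵀ = -J) (X : Matrix n n R) :
    (symplecticDefect J X)ᵀ = -symplecticDefect J X := by
  simp [transpose_mul, hJ, add_comm]

theorem symplecticDefect_conj {T T' : Matrix n n R} (hT : Tᵀ = T) (hT' : T'ᵀ = T')
    (hT'J : T' * J = J * T) (hJT' : J * T' = T * J) (X : Matrix n n R) :
    symplecticDefect J (T * (X * T')) = T * symplecticDefect J X * T := by
  simp only [symplecticDefect_apply, transpose_mul, hT, hT', Matrix.mul_assoc, hT'J]
  rw [← Matrix.mul_assoc J T', hJT']
  simp only [Matrix.mul_add, Matrix.add_mul, Matrix.mul_assoc]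

theorem symplecticDefect_neg_mul (hJ : Jᵀ = -J) (hJJ : J * J = -1) (Y : Matrix n n R) :
    symplecticDefect J (-(Y * J)) = Y - Yᵀ := by
  calc symplecticDefect J (-(Y * J)) = -(Y * (J * J)) + J * J * Yᵀ := by
        simp [transpose_mul, hJ, Matrix.mul_assoc]
    _ = Y - Yᵀ := by simp [hJJ, sub_eq_add_neg]

end Matrix

theorem J4_transpose : J4ᵀ = -J4 := by
  ext i j
  fin_cases i <;> fin_cases j <;> simp [J4]

theorem J4_mul_J4 : J4 * J4 = -1 := by
  ext i j
  fin_cases i <;> fin_cases j <;> simp [J4, mul_apply, Fin.sum_univ_four, one_apply]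

theorem diagonal_mul_J4 (x y z w : ℂ) :
    diagonal ![y, x, w, z] * J4 = J4 * diagonal ![x, y, z, w] := by
  ext i j
  fin_cases i <;> fin_cases j <;> simp [J4]

def upperPairs : Fin 6 → Fin 4 × Fin 4 := ![(0, 1), (0, 2), (0, 3), (1, 2), (1, 3), (2, 3)]

def upperWeights (d : Fin 4 → ℂ) (k : Fin 6) : ℂ := d (upperPairs k).1 * d (upperPairs k).2

theorem prod_upperWeights (x y z w : ℂ) :
    ∏ k, upperWeights ![x, y, z, w] k = (x * y * z * w) ^ 3 := by
  simp only [upperWeights, upperPairs, Fin.prod_univ_six, cons_val_zero, cons_val_one, cons_val]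
  ring

noncomputable def gl4ModSp4Coords : Matrix (Fin 4) (Fin 4) ℂ →ₗ[ℂ] Fin 6 → ℂ :=
  LinearMap.pi (fun k => entryLinearMap ℂ ℂ (upperPairs k).1 (upperPairs k).2) ∘ₗ
    symplecticDefect J4

@[simp]
theorem gl4ModSp4Coords_apply (X : Matrix (Fin 4) (Fin 4) ℂ) (k : Fin 6) :
    gl4ModSp4Coords X k = symplecticDefect J4 X (upperPairs k).1 (upperPairs k).2 :=
  rfl

theorem ker_gl4ModSp4Coords : LinearMap.ker gl4ModSp4Coords = sp4 := by
  ext X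
  change gl4ModSp4Coords X = 0 ↔ symplecticDefect J4 X = 0
  constructor
  · intro h
    refine eq_zero_of_transpose_eq_neg (transpose_symplecticDefect J4_transpose X) ?_
    intro i j hij
    obtain ⟨k, hk⟩ : ∃ k, upperPairs k = (i, j) := by revert i j; decide
    simpa [hk] using congr_fun h k
  · intro h
    ext k
    simp [h]

theorem gl4ModSp4Coords_surjective : Function.Surjective gl4ModSp4Coords := by
  intro c
  refine ⟨-(!![0, c 0, c 1, c 2; 0, 0, c 3, c 4; 0, 0, 0, c 5; 0, 0, 0, 0] * J4), ?_⟩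
  ext k
  rw [gl4ModSp4Coords_apply, symplecticDefect_neg_mul J4_transpose J4_mul_J4]
  fin_cases k <;> simp [upperPairs]

theorem gl4ModSp4Coords_comp_conj (x y z w : ℂ) :
    gl4ModSp4Coords ∘ₗ (LinearMap.mulLeft ℂ (diagonal ![x, y, z, w]) ∘ₗ
        LinearMap.mulRight ℂ (diagonal ![y, x, w, z])) =
      toLin' (diagonal (upperWeights ![x, y, z, w])) ∘ₗ gl4ModSp4Coords := by
  ext X k
  simp only [LinearMap.comp_apply, LinearMap.mulLeft_apply, LinearMap.mulRight_apply, toLin'_apply,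
    mulVec_diagonal, gl4ModSp4Coords_apply,
    symplecticDefect_conj (diagonal_transpose _) (diagonal_transpose _) (diagonal_mul_J4 x y z w)
      (diagonal_mul_J4 y x w z).symm, diagonal_mul, mul_diagonal, upperWeights]
  ring

/-- For `t = diag(a, a⁻¹, b, b⁻¹)` in the maximal torus of `Sp(4, ℂ)`, conjugation
`Ad(t) : X ↦ t·X·t⁻¹` maps `𝔰𝔭(4, ℂ)` into itself, and the induced linear
automorphism of the `6`-dimensional quotient `𝔤𝔩(4, ℂ)/𝔰𝔭(4, ℂ)` has determinant `1`. -/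
theorem det_symplectic_torus_on_gl4_mod_sp4_eq_one
    (a b : ℂ) (ha : a ≠ 0) (hb : b ≠ 0) :
    ∃ h : sp4 ≤ sp4.comap
        ((LinearMap.mulLeft ℂ (Matrix.diagonal ![a, a⁻¹, b, b⁻¹])).comp
          (LinearMap.mulRight ℂ (Matrix.diagonal ![a⁻¹, a, b⁻¹, b]))),
      Module.finrank ℂ (Matrix (Fin 4) (Fin 4) ℂ ⧸ sp4) = 6 ∧
      LinearMap.det (sp4.mapQ sp4
          ((LinearMap.mulLeft ℂ (Matrix.diagonal ![a, a⁻¹, b, b⁻¹])).comp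
            (LinearMap.mulRight ℂ (Matrix.diagonal ![a⁻¹, a, b⁻¹, b]))) h) = 1 := by
  have hconj := gl4ModSp4Coords_comp_conj a a⁻¹ b b⁻¹
  have h := ker_gl4ModSp4Coords ▸ LinearMap.ker_le_comap_ker_of_comp_eq hconj
  refine ⟨h, ?_, ?_⟩
  · rw [← ker_gl4ModSp4Coords,
      (LinearMap.quotKerEquivOfSurjective _ gl4ModSp4Coords_surjective).finrank_eq,
      Module.finrank_fin_fun]
  · rw [LinearMap.det_mapQ_eq_of_comp_eq gl4ModSp4Coords_surjective hconj ker_gl4ModSp4Coords h,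
      LinearMap.det_toLin', det_diagonal, prod_upperWeights]
    simp [ha, hb]
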